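/- Let S be a generalized left-symmetric algebra with commutation factor ε, and let F₁ ∈ Z²(S,S) be a degree-zero 2-cocycle (i.e., it satisfies the cocycle identity of the infinitesimal deformation). Define μ₂(x,y,z) := F₁(F₁(x,y),z) − F₁(x,F₁(y,z)) − ε(α,β)(F₁(F₁(y,x),z) − F₁(y,F₁(x,z))) for x ∈ S_α, y ∈ S_β, z ∈ S. Then μ₂ ∈ Z³(S,S), i.e., dμ₂ = 0 where d is the generalized left-symmetric coboundary operator. -/

import Mathlib

def IsCommutationFactor {k Γ : Type*} [Field k] [AddCommGroup Γ] (ε : Γ → Γ → k) : Prop :=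
  (∀ α β, ε α β * ε β α = 1) ∧
  (∀ α β γ, ε α (β + γ) = ε α β * ε α γ) ∧
  (∀ α β γ, ε (α + β) γ = ε α γ * ε β γ)

section

variable {k Γ S M : Type*} [Field k] [AddCommGroup Γ]
  [AddCommGroup S] [Module k S] [AddCommGroup M] [Module k M]

/-- The operator `D_t : Cⁱ(S,M) → Cⁱ⁺¹(S,M)` (cochains of arity `n` are encoded as maps
taking the degrees of the homogeneous arguments together with the arguments;
`β` is the degree of the cochain `f`). -/
def lsaD (ε : Γ → Γ → k) (mul : S →ₗ[k] S →ₗ[k] S)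
    (l : S →ₗ[k] M →ₗ[k] M) (r : M →ₗ[k] S →ₗ[k] M)
    (β : Γ) (t : ℕ) {i : ℕ} (f : (Fin i → Γ) → (Fin i → S) → M) :
    (Fin (i + 1) → Γ) → (Fin (i + 1) → S) → M :=
  fun αs xs =>
    if h : 1 ≤ t ∧ t ≤ i then
      let T : Fin (i + 1) := ⟨t - 1, by omega⟩
      let αs' : Fin i → Γ := T.removeNth αs
      let xs' : Fin i → S := T.removeNth xs
      ε (β + ∑ s ∈ Finset.Iio T, αs s) (αs T) • l (xs T) (f αs' xs')
        - ε (αs T) (∑ s ∈ Finset.Ioo T (Fin.last i), αs s) •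
            f (fun j => if (j : ℕ) = i - 1 then αs T + αs (Fin.last i) else αs' j)
              (fun j => if (j : ℕ) = i - 1 then mul (xs T) (xs (Fin.last i)) else xs' j)
        + ε (αs T) (∑ s ∈ Finset.Ioo T (Fin.last i), αs s) •
            r (f (fun j => if (j : ℕ) = i - 1 then αs T else αs' j)
                 (fun j => if (j : ℕ) = i - 1 then xs T else xs' j))
              (xs (Fin.last i))
        - ∑ J ∈ Finset.Ioo T (Fin.last i),
            ε (αs T) (∑ s ∈ Finset.Ioo T J, αs s) •
              f (fun j => if (j : ℕ) = (J : ℕ) - 1 then αs T + αs J else αs' j)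
                (fun j => if (j : ℕ) = (J : ℕ) - 1 then
                    mul (xs T) (xs J) - ε (αs T) (αs J) • mul (xs J) (xs T)
                  else xs' j)
    else 0

/-- The generalized left-symmetric coboundary operator `d = −Σ_t (−1)^t D_t`. -/
def lsaCoboundary (ε : Γ → Γ → k) (mul : S →ₗ[k] S →ₗ[k] S)
    (l : S →ₗ[k] M →ₗ[k] M) (r : M →ₗ[k] S →ₗ[k] M)
    (β : Γ) {i : ℕ} (f : (Fin i → Γ) → (Fin i → S) → M) :
    (Fin (i + 1) → Γ) → (Fin (i + 1) → S) → M :=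
  fun αs xs => -∑ t ∈ Finset.Icc 1 i, ((-1 : ℤ) ^ t) • lsaD ε mul l r β t f αs xs

/-- `μ₂(x,y,z) = F₁(F₁(x,y),z) − F₁(x,F₁(y,z)) − ε(α,β)(F₁(F₁(y,x),z) − F₁(y,F₁(x,z)))`,
as a degree-zero 3-cochain. -/
def mu2 (ε : Γ → Γ → k) (F1 : S →ₗ[k] S →ₗ[k] S) :
    (Fin 3 → Γ) → (Fin 3 → S) → S := fun αs xs =>
  F1 (F1 (xs 0) (xs 1)) (xs 2) - F1 (xs 0) (F1 (xs 1) (xs 2)) -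
    ε (αs 0) (αs 1) • (F1 (F1 (xs 1) (xs 0)) (xs 2) - F1 (xs 1) (F1 (xs 0) (xs 2)))

/-! The coboundary of `μ₂` is a combination of instances of the cocycle identity of `F₁`.
Write `δ(x, y, z)` for the difference of the two sides of that identity. The terms of
`dμ₂(x₀, x₁, x₂, x₃)` regroup, according to which of `x₀, x₁, x₂` stands apart from the other two,
into three copies of one expression `defectBracket` built from `δ` and `F₁`, weighted by the
commutation factors of the corresponding permutation. Since `F₁` preserves degrees, every `δ`
occurring there has homogeneous first two arguments, so all three copies vanish. -/

namespace IsCommutationFactor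

variable {ε : Γ → Γ → k}

theorem apply_add_right (hε : IsCommutationFactor ε) (α β γ : Γ) :
    ε α (β + γ) = ε α β * ε α γ :=
  hε.2.1 α β γ

theorem apply_add_left (hε : IsCommutationFactor ε) (α β γ : Γ) :
    ε (α + β) γ = ε α γ * ε β γ :=
  hε.2.2 α β γ

theorem ne_zero (hε : IsCommutationFactor ε) (α β : Γ) : ε α β ≠ 0 :=
  left_ne_zero_of_mul_eq_one (hε.1 α β)

theorem apply_swap (hε : IsCommutationFactor ε) (α β : Γ) : ε β α = (ε α β)⁻¹ :=
  eq_inv_of_mul_eq_one_right (hε.1 α β)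

theorem apply_zero_right (hε : IsCommutationFactor ε) (α : Γ) : ε α 0 = 1 :=
  mul_left_cancel₀ (hε.ne_zero α 0) (by rw [← hε.apply_add_right, add_zero, mul_one])

theorem apply_zero_left (hε : IsCommutationFactor ε) (α : Γ) : ε 0 α = 1 :=
  mul_left_cancel₀ (hε.ne_zero 0 α) (by rw [← hε.apply_add_left, add_zero, mul_one])

end IsCommutationFactor

theorem lsaCoboundary_three (ε : Γ → Γ → k) (mul : S →ₗ[k] S →ₗ[k] S)
    (l : S →ₗ[k] M →ₗ[k] M) (r : M →ₗ[k] S →ₗ[k] M) (β : Γ)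
    (f : (Fin 3 → Γ) → (Fin 3 → S) → M) (αs : Fin 4 → Γ) (xs : Fin 4 → S) :
    lsaCoboundary ε mul l r β f αs xs =
      (ε β (αs 0) • l (xs 0) (f ![αs 1, αs 2, αs 3] ![xs 1, xs 2, xs 3])
        - ε (αs 0) (αs 1 + αs 2) • f ![αs 1, αs 2, αs 0 + αs 3] ![xs 1, xs 2, mul (xs 0) (xs 3)]
        + ε (αs 0) (αs 1 + αs 2) • r (f ![αs 1, αs 2, αs 0] ![xs 1, xs 2, xs 0]) (xs 3)
        - (ε (αs 0) 0 • f ![αs 0 + αs 1, αs 2, αs 3]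
              ![mul (xs 0) (xs 1) - ε (αs 0) (αs 1) • mul (xs 1) (xs 0), xs 2, xs 3]
          + ε (αs 0) (αs 1) • f ![αs 1, αs 0 + αs 2, αs 3]
              ![xs 1, mul (xs 0) (xs 2) - ε (αs 0) (αs 2) • mul (xs 2) (xs 0), xs 3]))
      - (ε (β + αs 0) (αs 1) • l (xs 1) (f ![αs 0, αs 2, αs 3] ![xs 0, xs 2, xs 3])
        - ε (αs 1) (αs 2) • f ![αs 0, αs 2, αs 1 + αs 3] ![xs 0, xs 2, mul (xs 1) (xs 3)]
        + ε (αs 1) (αs 2) • r (f ![αs 0, αs 2, αs 1] ![xs 0, xs 2, xs 1]) (xs 3)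
        - ε (αs 1) 0 • f ![αs 0, αs 1 + αs 2, αs 3]
              ![xs 0, mul (xs 1) (xs 2) - ε (αs 1) (αs 2) • mul (xs 2) (xs 1), xs 3])
      + (ε (β + (αs 0 + αs 1)) (αs 2) • l (xs 2) (f ![αs 0, αs 1, αs 3] ![xs 0, xs 1, xs 3])
        - ε (αs 2) 0 • f ![αs 0, αs 1, αs 2 + αs 3] ![xs 0, xs 1, mul (xs 2) (xs 3)]
        + ε (αs 2) 0 • r (f ![αs 0, αs 1, αs 2] ![xs 0, xs 1, xs 2]) (xs 3)) := by
  have hIcc : Finset.Icc 1 3 = ({1, 2, 3} : Finset ℕ) := rfl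
  have h0 : (⟨1 - 1, by omega⟩ : Fin (3 + 1)) = 0 := rfl
  have h1 : (⟨2 - 1, by omega⟩ : Fin (3 + 1)) = 1 := rfl
  have h2 : (⟨3 - 1, by omega⟩ : Fin (3 + 1)) = 2 := rfl
  have hlast : Fin.last 3 = 3 := rfl
  have hIio0 : Finset.Iio (0 : Fin 4) = ∅ := by decide
  have hIio1 : Finset.Iio (1 : Fin 4) = {0} := by decide
  have hIio2 : Finset.Iio (2 : Fin 4) = {0, 1} := by decide
  have hIoo03 : Finset.Ioo (0 : Fin 4) 3 = {1, 2} := by decide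
  have hIoo13 : Finset.Ioo (1 : Fin 4) 3 = {2} := by decide
  have hIoo23 : Finset.Ioo (2 : Fin 4) 3 = ∅ := by decide
  have hIoo01 : Finset.Ioo (0 : Fin 4) 1 = ∅ := by decide
  have hIoo02 : Finset.Ioo (0 : Fin 4) 2 = {1} := by decide
  have hIoo12 : Finset.Ioo (1 : Fin 4) 2 = ∅ := by decide
  simp only [lsaCoboundary, lsaD, hIcc]
  simp +decide only [Finset.sum_insert, Finset.sum_singleton,
    Finset.mem_insert, Finset.mem_singleton, h0, h1, h2, hlast, hIio0, hIio1, hIio2, hIoo03,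
    hIoo13, hIoo23, hIoo01, hIoo02, hIoo12, Finset.sum_empty, dite_true, add_zero, sub_zero]
  rw [show ∀ A B C : M, -((-1 : ℤ) ^ 1 • A + ((-1 : ℤ) ^ 2 • B + (-1 : ℤ) ^ 3 • C)) = A - B + C by
    intro A B C; module]
  congr <;> funext j <;> fin_cases j <;> rfl

def cocycleDefect (ε : Γ → Γ → k) (mul F : S →ₗ[k] S →ₗ[k] S) (α β : Γ) (x y z : S) : S :=
  mul (F x y) z + F (mul x y) z - mul x (F y z) - F x (mul y z) -
    ε α β • (F (mul y x) z + mul (F y x) z - F y (mul x z) - mul y (F x z))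

def defectBracket (ε : Γ → Γ → k) (mul F : S →ₗ[k] S →ₗ[k] S) (α β γ : Γ) (x y z w : S) : S :=
  cocycleDefect ε mul F α β x y (F z w) - F (cocycleDefect ε mul F α β x y z) w
    - ε (α + β) γ • F z (cocycleDefect ε mul F α β x y w)
    + cocycleDefect ε mul F (α + β) γ (F x y) z w
    - ε α β • cocycleDefect ε mul F (β + α) γ (F y x) z w

theorem lsaCoboundary_mu2 {ε : Γ → Γ → k} (hε : IsCommutationFactor ε)
    (mul F : S →ₗ[k] S →ₗ[k] S) (αs : Fin 4 → Γ) (xs : Fin 4 → S) :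
    lsaCoboundary ε mul mul mul 0 (mu2 ε F) αs xs =
      defectBracket ε mul F (αs 0) (αs 1) (αs 2) (xs 0) (xs 1) (xs 2) (xs 3)
        - ε (αs 1) (αs 2) • defectBracket ε mul F (αs 0) (αs 2) (αs 1) (xs 0) (xs 2) (xs 1) (xs 3)
        + (ε (αs 0) (αs 1) * ε (αs 0) (αs 2)) •
            defectBracket ε mul F (αs 1) (αs 2) (αs 0) (xs 1) (xs 2) (xs 0) (xs 3) := by
  rw [lsaCoboundary_three]
  simp only [mu2, defectBracket, cocycleDefect, Matrix.cons_val_zero, Matrix.cons_val_one,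
    Matrix.cons_val_two, Matrix.head_cons, Matrix.tail_cons, map_sub, map_add, map_smul,
    LinearMap.sub_apply, LinearMap.add_apply, LinearMap.smul_apply, smul_sub, smul_add, smul_smul,
    hε.apply_add_left, hε.apply_add_right, hε.apply_zero_left, hε.apply_zero_right, zero_add]
  rw [hε.apply_swap (αs 0) (αs 1), hε.apply_swap (αs 0) (αs 2), hε.apply_swap (αs 1) (αs 2)]
  have := hε.ne_zero (αs 0) (αs 1)
  have := hε.ne_zero (αs 0) (αs 2)
  have := hε.ne_zero (αs 1) (αs 2)
  match_scalars <;> field_simp <;> ring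

theorem defectBracket_eq_zero {ε : Γ → Γ → k} {𝒜 : Γ → Submodule k S}
    {mul F : S →ₗ[k] S →ₗ[k] S}
    (hFdeg : ∀ ⦃α β : Γ⦄ ⦃x y : S⦄, x ∈ 𝒜 α → y ∈ 𝒜 β → F x y ∈ 𝒜 (α + β))
    (hδ : ∀ ⦃α β : Γ⦄ ⦃x y : S⦄ (z : S), x ∈ 𝒜 α → y ∈ 𝒜 β → cocycleDefect ε mul F α β x y z = 0)
    {α β γ : Γ} {x y z : S} (w : S) (hx : x ∈ 𝒜 α) (hy : y ∈ 𝒜 β) (hz : z ∈ 𝒜 γ) :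
    defectBracket ε mul F α β γ x y z w = 0 := by
  simp [defectBracket, hδ _ hx hy, hδ _ (hFdeg hx hy) hz, hδ _ (hFdeg hy hx) hz]

theorem stmt15_general
    (ε : Γ → Γ → k) (𝒜 : Γ → Submodule k S) (mul : S →ₗ[k] S →ₗ[k] S)
    (hε : IsCommutationFactor ε)
    (F1 : S →ₗ[k] S →ₗ[k] S)
    (hF1deg : ∀ ⦃α β : Γ⦄ ⦃x y : S⦄, x ∈ 𝒜 α → y ∈ 𝒜 β → F1 x y ∈ 𝒜 (α + β))
    (hF1cocycle : ∀ ⦃α β : Γ⦄ ⦃x y : S⦄ (z : S), x ∈ 𝒜 α → y ∈ 𝒜 β →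
      mul (F1 x y) z + F1 (mul x y) z - mul x (F1 y z) - F1 x (mul y z) =
        ε α β • (F1 (mul y x) z + mul (F1 y x) z - F1 y (mul x z) - mul y (F1 x z)))
    (αs : Fin 4 → Γ) (xs : Fin 4 → S) (hxs : ∀ j, xs j ∈ 𝒜 (αs j)) :
    lsaCoboundary ε mul mul mul (0 : Γ) (mu2 ε F1) αs xs = 0 := by
  have hδ : ∀ ⦃α β : Γ⦄ ⦃x y : S⦄ (z : S), x ∈ 𝒜 α → y ∈ 𝒜 β →
      cocycleDefect ε mul F1 α β x y z = 0 :=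
    fun _ _ _ _ z hx hy => sub_eq_zero_of_eq (hF1cocycle z hx hy)
  rw [lsaCoboundary_mu2 hε]
  simp only [defectBracket_eq_zero hF1deg hδ _ (hxs _) (hxs _) (hxs _), smul_zero, sub_zero,
    add_zero]

/-- If `F₁` is a degree-zero 2-cocycle on a generalized left-symmetric algebra `S` (with
the regular bimodule), then `μ₂ ∈ Z³(S,S)`: `d μ₂ = 0`. -/
theorem stmt15 [CharZero k]
    (ε : Γ → Γ → k) (𝒜 : Γ → Submodule k S) (mul : S →ₗ[k] S →ₗ[k] S)
    (hε : IsCommutationFactor ε)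
    (hgr : ∀ ⦃α β : Γ⦄ ⦃x y : S⦄, x ∈ 𝒜 α → y ∈ 𝒜 β → mul x y ∈ 𝒜 (α + β))
    (hlsi : ∀ ⦃α β : Γ⦄ ⦃x y : S⦄ (z : S), x ∈ 𝒜 α → y ∈ 𝒜 β →
      mul (mul x y) z - mul x (mul y z) = ε α β • (mul (mul y x) z - mul y (mul x z)))
    (F1 : S →ₗ[k] S →ₗ[k] S)
    (hF1deg : ∀ ⦃α β : Γ⦄ ⦃x y : S⦄, x ∈ 𝒜 α → y ∈ 𝒜 β → F1 x y ∈ 𝒜 (α + β))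
    (hF1cocycle : ∀ ⦃α β : Γ⦄ ⦃x y : S⦄ (z : S), x ∈ 𝒜 α → y ∈ 𝒜 β →
      mul (F1 x y) z + F1 (mul x y) z - mul x (F1 y z) - F1 x (mul y z) =
        ε α β • (F1 (mul y x) z + mul (F1 y x) z - F1 y (mul x z) - mul y (F1 x z)))
    (αs : Fin 4 → Γ) (xs : Fin 4 → S) (hxs : ∀ j, xs j ∈ 𝒜 (αs j)) :
    lsaCoboundary ε mul mul mul (0 : Γ) (mu2 ε F1) αs xs = 0 :=
  stmt15_general ε 𝒜 mul hε F1 hF1deg hF1cocycle αs xs hxs
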